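/- arXiv:1304.6999 — 4 statements merged into one kernel-verified Lean document; each statement's English description precedes it below -/
import Mathlib

section
/- Let T > 0 and p ∈ [0, 1/2). There exists a constant C > 0 such that for every positive integer N with h := T/N < 1, one has |Σ_{m≥1} λ_m^{-p} [ (1 - (1+λ_m h)^{-2N})/(2λ_m + λ_m² h) - (1 - e^{-2λ_m T})/(2λ_m) ]| ≤ C h^{p+1/2}. (This is the spectral form of the weak error bound |E|X^N(T)|²_{H^{-p}} - E|X(T)|²_{H^{-p}}| ≤ C h^{p+1/2} for the implicit Euler scheme of the stochastic heat equation, since E|X^N(T)|²_{H^{-p}} = Σ_{m≥1} λ_m^{-p} (1 - (1+λ_m h)^{-2N})/(2λ_m + λ_m² h) and E|X(T)|²_{H^{-p}} = Σ_{m≥1} λ_m^{-p} (1 - e^{-2λ_m T})/(2λ_m).) -/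
/-!
Each mode contributes `λ^{-p}` times the gap between the exact variance `(1 - e^{-2λT})/(2λ)`
and the scheme's variance. Writing `x = λh`, this gap splits into
`(1 - e^{-2xN}) x / (2λ(2 + x))` and `((1+x)^{-2N} - e^{-2xN}) / (λ(2+x))`. The first is at most
`min(1, x)/(2λ)`; for the second, `(1+x)^{-2} - e^{-2x} = O(x²)` and the mean value bound for
`b^N - a^N`, together with `N x (1+x)^{-2(N-1)} ≤ 1`, give `O(min(1, x))`. Hence the error is at
most `3 Σ_n n^{-2p} min(n^{-2}, h)` (using `λ_n ≥ n²`), and splitting the sum at `M ≈ h^{-1/2}`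
bounds the head by `h Σ_{n ≤ M} n^{-2p} ≲ h M^{1-2p}` and the tail by
`Σ_{n > M} n^{-2p-2} ≲ M^{-2p-1}`, both of order `h^{p+1/2}`.
-/

open Real

noncomputable def lam (m : ℕ) : ℝ := (Real.pi * m) ^ 2 / 2

open Finset

lemma one_add_sq_le_exp_two_mul {x : ℝ} (hx : -1 ≤ x) : (1 + x) ^ 2 ≤ exp (2 * x) := by
  rw [two_mul, exp_add, ← sq]
  exact pow_le_pow_left₀ (by linarith) (by linarith [add_one_le_exp x]) 2

lemma exp_neg_two_mul_pow_le {x : ℝ} (hx : 0 ≤ x) (N : ℕ) :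
    exp (-(2 * x)) ^ N ≤ ((1 + x) ^ (2 * N))⁻¹ := by
  rw [pow_mul, ← inv_pow, exp_neg]
  gcongr
  exact one_add_sq_le_exp_two_mul (by linarith)

lemma exp_two_mul_sub_one_add_sq_le {x : ℝ} (hx0 : 0 ≤ x) (hx1 : x ≤ 1) :
    exp (2 * x) - (1 + x) ^ 2 ≤ 5 * x ^ 2 := by
  have h := abs_exp_sub_one_sub_id_le (x := x) (by rwa [abs_of_nonneg hx0])
  have hq : exp x ≤ 1 + x + x ^ 2 := by linarith [le_abs_self (exp x - 1 - x)]
  rw [two_mul, exp_add]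
  have hsq := mul_le_mul hq hq (exp_pos x).le (by positivity)
  nlinarith [mul_le_mul_of_nonneg_left hx1 (sq_nonneg x),
    mul_le_mul_of_nonneg_left hx1 (pow_nonneg hx0 3)]

lemma inv_one_add_sq_sub_exp_le {x : ℝ} (hx0 : 0 ≤ x) (hx1 : x ≤ 1) :
    ((1 + x) ^ 2)⁻¹ - exp (-(2 * x)) ≤ 5 * x ^ 2 := by
  have hD : 1 ≤ (1 + x) ^ 2 * exp (2 * x) :=
    one_le_mul_of_one_le_of_one_le (by nlinarith) (one_le_exp (by linarith))
  have key : ((1 + x) ^ 2)⁻¹ - exp (-(2 * x)) =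
      (exp (2 * x) - (1 + x) ^ 2) / ((1 + x) ^ 2 * exp (2 * x)) := by
    rw [exp_neg]; field_simp
  rw [key, div_le_iff₀ (by linarith)]
  nlinarith [exp_two_mul_sub_one_add_sq_le hx0 hx1, sq_nonneg x]

lemma natCast_mul_le_one_add_pow {x : ℝ} (hx0 : 0 ≤ x) (hx1 : x ≤ 1) (N : ℕ) :
    N * x ≤ (1 + x) ^ (2 * (N - 1)) := by
  rcases N with _ | n
  · simp
  · have := one_add_mul_le_pow (a := x) (by linarith) (2 * n)
    rw [Nat.add_sub_cancel]
    push_cast at this ⊢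
    nlinarith [mul_nonneg (Nat.cast_nonneg (α := ℝ) n) hx0]

lemma inv_one_add_pow_sub_exp_pow_le {x : ℝ} (hx : 0 ≤ x) (N : ℕ) :
    ((1 + x) ^ (2 * N))⁻¹ - exp (-(2 * x)) ^ N ≤ 5 * min 1 x := by
  rcases le_total x 1 with hx1 | hx1
  · set a := exp (-(2 * x))
    set b := ((1 + x) ^ 2)⁻¹
    have hab : a ≤ b := by simpa using exp_neg_two_mul_pow_le hx 1
    have ha : 0 ≤ a := (exp_pos _).le
    have hmv : b ^ N - a ^ N ≤ (b - a) * N * b ^ (N - 1) := by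
      have := abs_pow_sub_pow_le b a N
      rw [abs_of_nonneg (sub_nonneg.2 hab), abs_of_nonneg (ha.trans hab), abs_of_nonneg ha,
        max_eq_left hab] at this
      exact (le_abs_self _).trans this
    have hNb : N * x * b ^ (N - 1) ≤ 1 := by
      rw [show b ^ (N - 1) = ((1 + x) ^ (2 * (N - 1)))⁻¹ by rw [pow_mul, inv_pow],
        ← div_eq_mul_inv]
      exact div_le_one_of_le₀ (natCast_mul_le_one_add_pow hx hx1 N) (by positivity)
    rw [pow_mul, ← inv_pow, min_eq_right hx1]
    calc b ^ N - a ^ N ≤ (b - a) * N * b ^ (N - 1) := hmv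
      _ ≤ 5 * x ^ 2 * N * b ^ (N - 1) := by
        gcongr
        exact inv_one_add_sq_sub_exp_le hx hx1
      _ = 5 * x * (N * x * b ^ (N - 1)) := by ring
      _ ≤ 5 * x := mul_le_of_le_one_right (by positivity) hNb
  · have : ((1 + x) ^ (2 * N))⁻¹ ≤ 1 := inv_le_one_of_one_le₀ (one_le_pow₀ (by linarith))
    rw [min_eq_left hx1]
    linarith [pow_pos (exp_pos (-(2 * x))) N]

/-- Exact minus implicit-Euler variance of the mode with eigenvalue `l`, time step `T / N`. -/
noncomputable def eulerModeError (l T : ℝ) (N : ℕ) : ℝ :=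
  (1 - exp (-2 * l * T)) / (2 * l) -
    (1 - ((1 + l * (T / N)) ^ (2 * N))⁻¹) / (2 * l + l ^ 2 * (T / N))

lemma eulerModeError_eq {l T : ℝ} (hl : 0 < l) (hT : 0 ≤ T) {N : ℕ} (hN : 0 < N) :
    eulerModeError l T N =
      (1 - exp (-(2 * (l * (T / N)))) ^ N) * (l * (T / N)) / (2 * l * (2 + l * (T / N))) +
        (((1 + l * (T / N)) ^ (2 * N))⁻¹ - exp (-(2 * (l * (T / N)))) ^ N) /
          (l * (2 + l * (T / N))) := by
  have hE : exp (-2 * l * T) = exp (-(2 * (l * (T / N)))) ^ N := by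
    rw [← exp_nat_mul]; congr 1; field_simp
  have : 0 < 2 + l * (T / N) := by positivity
  rw [eulerModeError, hE]
  field_simp
  ring

lemma eulerModeError_nonneg {l T : ℝ} (hl : 0 < l) (hT : 0 ≤ T) {N : ℕ} (hN : 0 < N) :
    0 ≤ eulerModeError l T N := by
  have hx : 0 ≤ l * (T / N) := by positivity
  have hE := exp_neg_two_mul_pow_le hx N
  have hE1 : exp (-(2 * (l * (T / N)))) ^ N ≤ 1 :=
    pow_le_one₀ (exp_pos _).le (exp_le_one_iff.2 (by linarith))
  rw [eulerModeError_eq hl hT hN]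
  have := sub_nonneg.2 hE
  have := sub_nonneg.2 hE1
  positivity

lemma eulerModeError_le {l T : ℝ} (hl : 0 < l) (hT : 0 ≤ T) {N : ℕ} (hN : 0 < N) :
    eulerModeError l T N ≤ 3 * min l⁻¹ (T / N) := by
  set x := l * (T / N)
  set E := exp (-(2 * x)) ^ N
  have hx : 0 ≤ x := by positivity
  have hE0 : 0 ≤ E := by positivity
  have hE1 : E ≤ 1 := pow_le_one₀ (exp_pos _).le (exp_le_one_iff.2 (by linarith))
  have hratio : (1 - E) * x / (2 + x) ≤ min 1 x := by
    rw [div_le_iff₀ (by positivity)]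
    rcases le_total x 1 with hx1 | hx1
    · rw [min_eq_right hx1]; nlinarith
    · rw [min_eq_left hx1]; nlinarith
  have hfirst : (1 - E) * x / (2 * l * (2 + x)) ≤ min 1 x / (2 * l) := by
    rw [mul_comm (2 * l), ← div_div]
    gcongr
  have hsecond : (((1 + x) ^ (2 * N))⁻¹ - E) / (l * (2 + x)) ≤ 5 * min 1 x / (2 * l) :=
    div_le_div₀ (by positivity) (inv_one_add_pow_sub_exp_pow_le hx N) (by positivity)
      (by nlinarith)
  have hmin : min 1 x / l = min l⁻¹ (T / N) := by
    rw [← min_div_div_right hl.le, one_div, mul_div_cancel_left₀ _ hl.ne']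
  rw [eulerModeError_eq hl hT hN, ← hmin]
  linarith [show min 1 x / (2 * l) + 5 * min 1 x / (2 * l) = 3 * (min 1 x / l) by ring]

section SpectralSum

variable {s : ℝ}

lemma one_sub_mul_rpow_neg_le {t : ℝ} (ht : 0 ≤ t) (hs0 : 0 ≤ s) (hs1 : s ≤ 1) :
    (1 - s) * (t + 1) ^ (-s) ≤ (t + 1) ^ (1 - s) - t ^ (1 - s) := by
  have ht1 : 0 < t + 1 := by linarith
  have hinv : (t + 1)⁻¹ ≤ 1 := inv_le_one_of_one_le₀ (by linarith)
  calc (1 - s) * (t + 1) ^ (-s) = (t + 1) ^ (1 - s) * (1 - s) * (t + 1)⁻¹ := by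
        rw [show -s = 1 - s - 1 by ring, rpow_sub_one ht1.ne']; ring
    _ = (t + 1) ^ (1 - s) - (t + 1) ^ (1 - s) * (1 + (1 - s) * -(t + 1)⁻¹) := by ring
    _ ≤ (t + 1) ^ (1 - s) - (t + 1) ^ (1 - s) * (1 + -(t + 1)⁻¹) ^ (1 - s) := by
        gcongr
        exact rpow_one_add_le_one_add_mul_self (by linarith) (by linarith) (by linarith)
    _ = (t + 1) ^ (1 - s) - t ^ (1 - s) := by
        rw [← mul_rpow ht1.le (by linarith)]
        congr 2
        field_simp
        ring

lemma sum_range_add_one_rpow_neg_le (hs0 : 0 ≤ s) (hs1 : s < 1) (M : ℕ) :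
    ∑ i ∈ range M, ((i : ℝ) + 1) ^ (-s) ≤ (M : ℝ) ^ (1 - s) / (1 - s) := by
  rw [le_div_iff₀ (by linarith), sum_mul]
  calc ∑ i ∈ range M, ((i : ℝ) + 1) ^ (-s) * (1 - s)
      ≤ ∑ i ∈ range M, (((i + 1 : ℕ) : ℝ) ^ (1 - s) - (i : ℝ) ^ (1 - s)) := by
        gcongr with i
        push_cast
        rw [mul_comm]
        exact one_sub_mul_rpow_neg_le i.cast_nonneg hs0 hs1.le
    _ = (M : ℝ) ^ (1 - s) := by
        rw [sum_range_sub (fun i : ℕ => (i : ℝ) ^ (1 - s))]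
        simp [zero_rpow (by linarith : 1 - s ≠ 0)]

lemma summable_inv_nat_add_one_sq_add (M : ℕ) :
    Summable fun j : ℕ => ((((j + M : ℕ) : ℝ) + 1) ^ 2)⁻¹ := by
  have := (summable_nat_add_iff (M + 1)).2 (summable_nat_pow_inv.2 one_lt_two)
  refine this.congr fun j => ?_
  push_cast
  ring_nf

lemma tsum_inv_nat_add_one_sq_add_le (M : ℕ) :
    ∑' j : ℕ, ((((j + M : ℕ) : ℝ) + 1) ^ 2)⁻¹ ≤ 2 / ((M : ℝ) + 1) := by
  refine Real.tsum_le_of_sum_range_le (fun _ => by positivity) fun K => ?_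
  calc ∑ j ∈ range K, ((((j + M : ℕ) : ℝ) + 1) ^ 2)⁻¹
      = ∑ i ∈ Ioo M (K + (M + 1)), ((i : ℝ) ^ 2)⁻¹ := by
        have := sum_Ico_add' (fun i : ℕ => ((i : ℝ) ^ 2)⁻¹) 0 K (M + 1)
        rw [zero_add] at this
        rw [← Ico_add_one_left_eq_Ioo, ← this, range_eq_Ico]
        refine sum_congr rfl fun j _ => ?_
        push_cast
        ring
    _ ≤ 2 / ((M : ℝ) + 1) := sum_Ioo_inv_sq_le M _

lemma summable_add_one_rpow_neg_mul_min (hs : 0 ≤ s) {h : ℝ} (hh : 0 ≤ h) :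
    Summable fun n : ℕ => ((n : ℝ) + 1) ^ (-s) * min (((n : ℝ) + 1) ^ 2)⁻¹ h := by
  refine Summable.of_nonneg_of_le (fun n => by positivity) (fun n => ?_)
    (by simpa using summable_inv_nat_add_one_sq_add 0)
  calc ((n : ℝ) + 1) ^ (-s) * min (((n : ℝ) + 1) ^ 2)⁻¹ h ≤ 1 * (((n : ℝ) + 1) ^ 2)⁻¹ := by
        gcongr
        · exact rpow_le_one_of_one_le_of_nonpos (by linarith [n.cast_nonneg (α := ℝ)])
            (by linarith)
        · exact min_le_left _ _
    _ = (((n : ℝ) + 1) ^ 2)⁻¹ := one_mul _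

lemma tsum_add_one_rpow_neg_mul_min_le (hs0 : 0 ≤ s) (hs1 : s < 1) {h : ℝ} (hh : 0 < h) :
    ∑' n : ℕ, ((n : ℝ) + 1) ^ (-s) * min (((n : ℝ) + 1) ^ 2)⁻¹ h ≤
      (1 / (1 - s) + 2) * h ^ ((s + 1) / 2) := by
  set r := h ^ (-(1 / 2) : ℝ)
  have hr : 0 < r := rpow_pos_of_pos hh _
  set M := ⌊r⌋₊
  have hMr : (M : ℝ) ≤ r := Nat.floor_le hr.le
  have hrM : r < M + 1 := Nat.lt_floor_add_one r
  have hhead : ∑ i ∈ range M, ((i : ℝ) + 1) ^ (-s) * min (((i : ℝ) + 1) ^ 2)⁻¹ h ≤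
      h ^ ((s + 1) / 2) / (1 - s) :=
    calc _ ≤ ∑ i ∈ range M, h * ((i : ℝ) + 1) ^ (-s) := by
          refine sum_le_sum fun i _ => ?_
          rw [mul_comm h]
          exact mul_le_mul_of_nonneg_left (min_le_right _ _) (by positivity)
      _ ≤ h * ((M : ℝ) ^ (1 - s) / (1 - s)) := by
          rw [← mul_sum]
          gcongr
          exact sum_range_add_one_rpow_neg_le hs0 hs1 M
      _ ≤ h * (r ^ (1 - s) / (1 - s)) := by
          gcongr
      _ = h ^ ((s + 1) / 2) / (1 - s) := by
          rw [← rpow_mul hh.le, mul_div_assoc', ← rpow_one_add' hh.le (by linarith)]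
          ring_nf
  have htail :
      ∑' j : ℕ, (((j + M : ℕ) : ℝ) + 1) ^ (-s) * min ((((j + M : ℕ) : ℝ) + 1) ^ 2)⁻¹ h ≤
        2 * h ^ ((s + 1) / 2) :=
    calc _ ≤ ∑' j : ℕ, ((M : ℝ) + 1) ^ (-s) * ((((j + M : ℕ) : ℝ) + 1) ^ 2)⁻¹ := by
          refine Summable.tsum_le_tsum (fun j => ?_)
            ((summable_nat_add_iff M).2 (summable_add_one_rpow_neg_mul_min hs0 hh.le))
            ((summable_inv_nat_add_one_sq_add M).mul_left _)
          refine mul_le_mul (rpow_le_rpow_of_nonpos (by positivity) ?_ (by linarith))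
            (min_le_left _ _) (by positivity) (by positivity)
          push_cast
          linarith [j.cast_nonneg (α := ℝ)]
      _ ≤ ((M : ℝ) + 1) ^ (-s) * (2 / ((M : ℝ) + 1)) := by
          rw [tsum_mul_left]
          gcongr
          exact tsum_inv_nat_add_one_sq_add_le M
      _ = 2 * ((M : ℝ) + 1) ^ (-(s + 1)) := by
          rw [neg_add, rpow_add (by positivity), rpow_neg_one]
          ring
      _ ≤ 2 * r ^ (-(s + 1)) :=
          mul_le_mul_of_nonneg_left (rpow_le_rpow_of_nonpos hr hrM.le (by linarith))
            zero_le_two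
      _ = 2 * h ^ ((s + 1) / 2) := by
          rw [← rpow_mul hh.le]
          ring_nf
  rw [← (summable_add_one_rpow_neg_mul_min hs0 hh.le).sum_add_tsum_nat_add M]
  linarith [show (1 / (1 - s) + 2) * h ^ ((s + 1) / 2) =
    h ^ ((s + 1) / 2) / (1 - s) + 2 * h ^ ((s + 1) / 2) by ring]

end SpectralSum

lemma sq_le_lam (m : ℕ) : ((m : ℝ) + 1) ^ 2 ≤ lam (m + 1) := by
  have hpi : 1 ≤ π ^ 2 / 2 := by nlinarith [pi_gt_three]
  rw [lam]
  push_cast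
  nlinarith [sq_nonneg ((m : ℝ) + 1)]

lemma lam_succ_pos (m : ℕ) : 0 < lam (m + 1) :=
  (by positivity : (0 : ℝ) < ((m : ℝ) + 1) ^ 2).trans_le (sq_le_lam m)

lemma lam_rpow_neg_mul_eulerModeError_le {p T : ℝ} (hp : 0 ≤ p) (hT : 0 ≤ T) {N : ℕ}
    (hN : 0 < N) (m : ℕ) :
    lam (m + 1) ^ (-p) * eulerModeError (lam (m + 1)) T N ≤
      3 * (((m : ℝ) + 1) ^ (-(2 * p)) * min (((m : ℝ) + 1) ^ 2)⁻¹ (T / N)) := by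
  have hq : 0 < ((m : ℝ) + 1) ^ 2 := by positivity
  have hql := sq_le_lam m
  calc lam (m + 1) ^ (-p) * eulerModeError (lam (m + 1)) T N
      ≤ lam (m + 1) ^ (-p) * (3 * min (lam (m + 1))⁻¹ (T / N)) :=
        mul_le_mul_of_nonneg_left (eulerModeError_le (lam_succ_pos m) hT hN)
          (rpow_nonneg (lam_succ_pos m).le _)
    _ = 3 * (lam (m + 1) ^ (-p) * min (lam (m + 1))⁻¹ (T / N)) := by ring
    _ ≤ 3 * ((((m : ℝ) + 1) ^ 2) ^ (-p) * min (((m : ℝ) + 1) ^ 2)⁻¹ (T / N)) := by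
        refine mul_le_mul_of_nonneg_left (mul_le_mul (rpow_le_rpow_of_nonpos hq hql (by linarith))
          (min_le_min_right _ (inv_anti₀ hq hql)) ?_ (by positivity)) zero_le_three
        exact le_min (inv_nonneg.2 (lam_succ_pos m).le) (by positivity)
    _ = 3 * (((m : ℝ) + 1) ^ (-(2 * p)) * min (((m : ℝ) + 1) ^ 2)⁻¹ (T / N)) := by
        rw [← rpow_natCast_mul (by positivity)]
        push_cast
        ring_nf

/-- Spectral form of the weak error bound for the implicit Euler scheme of the
stochastic heat equation in negative Sobolev spaces `H^{-p}`, `p ∈ [0, 1/2)`. -/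
theorem stmt_0 (T : ℝ) (hT : 0 < T) (p : ℝ) (hp0 : 0 ≤ p) (hp : p < 1 / 2) :
    ∃ C : ℝ, 0 < C ∧ ∀ N : ℕ, 0 < N → T / N < 1 →
      |∑' m : ℕ,
          lam (m + 1) ^ (-p) *
            ((1 - ((1 + lam (m + 1) * (T / N)) ^ (2 * N))⁻¹) /
                (2 * lam (m + 1) + lam (m + 1) ^ 2 * (T / N)) -
              (1 - Real.exp (-2 * lam (m + 1) * T)) / (2 * lam (m + 1)))| ≤
        C * (T / N) ^ (p + 1 / 2) := by
  have hs : 0 < 1 - 2 * p := by linarith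
  refine ⟨3 * (1 / (1 - 2 * p) + 2), by positivity, fun N hN _ => ?_⟩
  have hh : 0 < T / N := by positivity
  set err := fun m : ℕ => lam (m + 1) ^ (-p) * eulerModeError (lam (m + 1)) T N
  set c := fun m : ℕ => ((m : ℝ) + 1) ^ (-(2 * p)) * min (((m : ℝ) + 1) ^ 2)⁻¹ (T / N)
  have herr_nonneg : ∀ m, 0 ≤ err m := fun m =>
    mul_nonneg (rpow_nonneg (lam_succ_pos m).le _) (eulerModeError_nonneg (lam_succ_pos m) hT.le hN)
  have herr_le : ∀ m, err m ≤ 3 * c m :=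
    lam_rpow_neg_mul_eulerModeError_le hp0 hT.le hN
  have hc : Summable c := summable_add_one_rpow_neg_mul_min (by linarith) hh.le
  calc _ = |-∑' m, err m| := by
        rw [← tsum_neg]
        exact congrArg abs (tsum_congr fun m => by simp only [err, eulerModeError]; ring)
    _ = ∑' m, err m := by rw [abs_neg, abs_of_nonneg (tsum_nonneg herr_nonneg)]
    _ ≤ ∑' m, 3 * c m :=
        (hc.mul_left 3).of_nonneg_of_le herr_nonneg herr_le |>.tsum_le_tsum herr_le (hc.mul_left 3)
    _ = 3 * ∑' m, c m := tsum_mul_left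
    _ ≤ 3 * ((1 / (1 - 2 * p) + 2) * (T / N) ^ ((2 * p + 1) / 2)) := by
        gcongr
        exact tsum_add_one_rpow_neg_mul_min_le (by linarith) (by linarith) hh
    _ = 3 * (1 / (1 - 2 * p) + 2) * (T / N) ^ (p + 1 / 2) := by ring_nf
end

section
/- Let λ > 0, h > 0 and 0 ≤ r ≤ h. Let Y be a square-integrable centered real random variable with E|Y|² ≤ 1/(2λ), and let G be a centered Gaussian random variable with variance r, independent of Y. Define β := -(λ/(1+λh)) (Y + G) and Z := (1 - λr/(1+λh)) (Y + G). Then: (i) E|β|² ≤ 2λ; (ii) E|Z|² ≤ 1/(2λ) + h; (iii) |E(β Z)| ≤ 1. -/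
open MeasureTheory ProbabilityTheory
open scoped NNReal

/-! Both `β` and `Z` are scalar multiples of `Y + G`, so all three quantities are multiples of
`S = E(Y + G)²`. Independence and `E G = 0` kill the cross term, whence
`S = E Y² + r ≤ 1/(2λ) + h`. It remains to check that the coefficients `c = λ/(1+λh)` and
`d = 1 - λr/(1+λh)` satisfy `c ≤ λ`, `c (1/(2λ) + h) ≤ 1` and `0 ≤ d ≤ 1`. -/

section GaussianMoments

variable {Ω : Type*} [MeasurableSpace Ω] {P : Measure Ω} {G : Ω → ℝ} {μ : ℝ} {v : ℝ≥0}

lemma hasLaw_of_map_eq_gaussianReal (hG : P.map G = gaussianReal μ v) :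
    HasLaw G (gaussianReal μ v) P :=
  ⟨aemeasurable_of_map_neZero (by rw [hG]; infer_instance), hG⟩

lemma memLp_of_map_eq_gaussianReal (hG : P.map G = gaussianReal μ v) (p : ℝ≥0) :
    MemLp G p P := by
  have := memLp_id_gaussianReal (μ := μ) (v := v) p
  rw [← hG] at this
  exact this.comp_of_map (hasLaw_of_map_eq_gaussianReal hG).aemeasurable

lemma integral_of_map_eq_gaussianReal (hG : P.map G = gaussianReal μ v) :
    ∫ ω, G ω ∂P = μ := by
  rw [(hasLaw_of_map_eq_gaussianReal hG).integral_eq, integral_id_gaussianReal]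

lemma integral_sq_of_map_eq_gaussianReal (hG : P.map G = gaussianReal 0 v) :
    ∫ ω, G ω ^ 2 ∂P = v := by
  have hlaw := hasLaw_of_map_eq_gaussianReal hG
  rw [← variance_of_integral_eq_zero hlaw.aemeasurable (integral_of_map_eq_gaussianReal hG),
    hlaw.variance_eq, variance_id_gaussianReal]

end GaussianMoments

lemma ProbabilityTheory.IndepFun.integral_add_sq_of_integral_eq_zero {Ω : Type*}
    [MeasurableSpace Ω] {P : Measure Ω} [IsFiniteMeasure P] {X Y : Ω → ℝ} (hXY : IndepFun X Y P)
    (hX : MemLp X 2 P) (hY : MemLp Y 2 P) (hY0 : ∫ ω, Y ω ∂P = 0) :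
    ∫ ω, (X ω + Y ω) ^ 2 ∂P = ∫ ω, X ω ^ 2 ∂P + ∫ ω, Y ω ^ 2 ∂P := by
  have hcross : ∫ ω, X ω * Y ω ∂P = 0 := by
    rw [hXY.integral_fun_mul_eq_mul_integral hX.aestronglyMeasurable hY.aestronglyMeasurable,
      hY0, mul_zero]
  have hXYint : Integrable (fun ω ↦ 2 * (X ω * Y ω)) P :=
    (hXY.integrable_mul (hX.integrable one_le_two) (hY.integrable one_le_two)).const_mul 2
  simp only [add_sq', mul_assoc]
  rw [integral_add (hX.integrable_sq.fun_add hY.integrable_sq) hXYint,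
    integral_add hX.integrable_sq hY.integrable_sq, integral_const_mul, hcross]
  ring

section Coefficients

variable {lam h r : ℝ}

lemma div_one_add_mul_le_self (hlam : 0 < lam) (hh : 0 ≤ h) : lam / (1 + lam * h) ≤ lam :=
  div_le_self hlam.le (le_add_of_nonneg_right (by positivity))

lemma div_one_add_mul_mul_le_one (hlam : 0 < lam) (hh : 0 ≤ h) :
    lam / (1 + lam * h) * (1 / (2 * lam) + h) ≤ 1 := by
  rw [div_mul_eq_mul_div, div_le_one (by positivity), mul_add, mul_one_div,
    div_mul_cancel_right₀ hlam.ne']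
  linarith [mul_nonneg hlam.le hh]

lemma one_sub_mul_div_one_add_mul_mem_Icc (hlam : 0 ≤ lam) (hr0 : 0 ≤ r) (hrh : r ≤ h) :
    1 - lam * r / (1 + lam * h) ∈ Set.Icc 0 1 := by
  have hd : 0 < 1 + lam * h := by nlinarith
  constructor
  · rw [sub_nonneg, div_le_one hd]
    nlinarith
  · linarith [show 0 ≤ lam * r / (1 + lam * h) by positivity]

end Coefficients

theorem stmt_4_general {Ω : Type*} [MeasurableSpace Ω] (P : Measure Ω) [IsProbabilityMeasure P]
    (lam h r : ℝ) (hlam : 0 < lam) (hr0 : 0 ≤ r) (hrh : r ≤ h)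
    (Y G : Ω → ℝ)
    (hY2 : MemLp Y 2 P)
    (hYvar : ∫ ω, (Y ω) ^ 2 ∂P ≤ 1 / (2 * lam))
    (hG : Measure.map G P = gaussianReal 0 r.toNNReal)
    (hindep : IndepFun Y G P) :
    (∫ ω, (-(lam / (1 + lam * h)) * (Y ω + G ω)) ^ 2 ∂P ≤ 2 * lam) ∧
    (∫ ω, ((1 - lam * r / (1 + lam * h)) * (Y ω + G ω)) ^ 2 ∂P ≤ 1 / (2 * lam) + h) ∧
    |∫ ω, (-(lam / (1 + lam * h)) * (Y ω + G ω)) *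
        ((1 - lam * r / (1 + lam * h)) * (Y ω + G ω)) ∂P| ≤ 1 := by
  have hh₀ : 0 ≤ h := hr0.trans hrh
  set S := ∫ ω, (Y ω + G ω) ^ 2 ∂P with hS
  have hS_le : S ≤ 1 / (2 * lam) + h := by
    rw [hS, hindep.integral_add_sq_of_integral_eq_zero hY2 (memLp_of_map_eq_gaussianReal hG 2)
      (integral_of_map_eq_gaussianReal hG), integral_sq_of_map_eq_gaussianReal hG,
      Real.coe_toNNReal r hr0]
    linarith
  have hS_nonneg : 0 ≤ S := integral_nonneg fun ω ↦ sq_nonneg _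
  have hscale (a b : ℝ) : ∫ ω, (a * (Y ω + G ω)) * (b * (Y ω + G ω)) ∂P = a * b * S := by
    rw [hS, ← integral_const_mul]
    exact integral_congr_ae (ae_of_all _ fun ω ↦ by ring)
  simp only [sq (_ * _), hscale]
  have hc_pos : 0 < lam / (1 + lam * h) := by positivity
  have hc_le := div_one_add_mul_le_self hlam hh₀
  have hcS := (mul_le_mul_of_nonneg_left hS_le hc_pos.le).trans
    (div_one_add_mul_mul_le_one hlam hh₀)
  obtain ⟨hd₀, hd₁⟩ := one_sub_mul_div_one_add_mul_mem_Icc hlam.le hr0 hrh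
  set c := lam / (1 + lam * h)
  set d := 1 - lam * r / (1 + lam * h)
  refine ⟨by nlinarith, by nlinarith [mul_le_one₀ hd₁ hd₀ hd₁], ?_⟩
  rw [neg_mul, neg_mul, abs_neg, abs_of_nonneg (by positivity)]
  nlinarith

/-- Moment bounds for the drift `β` and the interpolation `Z` of the implicit
Euler scheme for the Ornstein–Uhlenbeck process (Lemma 3.5, abstract form). -/
theorem stmt_4 {Ω : Type*} [MeasurableSpace Ω] (P : Measure Ω) [IsProbabilityMeasure P]
    (lam h r : ℝ) (hlam : 0 < lam) (hh : 0 < h) (hr0 : 0 ≤ r) (hrh : r ≤ h)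
    (Y G : Ω → ℝ)
    (hY2 : MemLp Y 2 P) (hYmean : ∫ ω, Y ω ∂P = 0)
    (hYvar : ∫ ω, (Y ω) ^ 2 ∂P ≤ 1 / (2 * lam))
    (hG : Measure.map G P = gaussianReal 0 r.toNNReal)
    (hindep : IndepFun Y G P) :
    (∫ ω, (-(lam / (1 + lam * h)) * (Y ω + G ω)) ^ 2 ∂P ≤ 2 * lam) ∧
    (∫ ω, ((1 - lam * r / (1 + lam * h)) * (Y ω + G ω)) ^ 2 ∂P ≤ 1 / (2 * lam) + h) ∧
    |∫ ω, (-(lam / (1 + lam * h)) * (Y ω + G ω)) *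
        ((1 - lam * r / (1 + lam * h)) * (Y ω + G ω)) ∂P| ≤ 1 :=
  stmt_4_general P lam h r hlam hr0 hrh Y G hY2 hYvar hG hindep
end

section
/- Let T > 0, p ∈ [0, 1/2) and n a positive integer. There exists a constant C > 0, independent of N, such that for every integer N ≥ 2 with h := T/N, and every doubly indexed family (v(k,m))_{0 ≤ k ≤ N-2, m ≥ 1} satisfying 0 ≤ v(k,m) ≤ λ_m^{n-p} h^{n+1} e^{-2 λ_m (T - t_{k+1})} (where t_j := j h), one has Σ_{m≥1} Σ_{k=0}^{N-2} v(k,m) ≤ C h^{p + 1/2}. -/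
/-!
Put `s = T - t_{k+1} = (N - 1 - k) h`. The elementary bound `x ^ a * exp (-x) ≤ (a / e) ^ a`
at `x = λ_m s` trades the factor `λ_m ^ (n - p)` for `s ^ (-(n - p))`, spending half of the
exponential `exp (-2 λ_m s)`. The remaining series `∑_m exp (-λ_m s)` is `O(s ^ (-1/2))`:
since `m² s ≥ 2 m √s - 1`, it is dominated by a geometric series of ratio `exp (-π² √s)`.
Hence, with `j = N - 1 - k`, the `k`-th time level contributes
`O(h ^ (n + 1) s ^ (-(n - p + 1/2))) = O(h ^ (p + 1/2) j ^ (-(n - p + 1/2)))`,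
and `∑_j j ^ (-(n - p + 1/2))` converges because `n ≥ 1 > p + 1/2`.
-/

open Real Finset

lemma lam_nonneg (m : ℕ) : 0 ≤ lam m := by unfold lam; positivity

lemma rpow_mul_exp_neg_le {a x : ℝ} (ha : 0 < a) (hx : 0 ≤ x) :
    x ^ a * exp (-x) ≤ (a / exp 1) ^ a := by
  have h : ((x / a) * exp (-(x / a))) ^ a ≤ exp (-1) ^ a :=
    rpow_le_rpow (by positivity) (mul_exp_neg_le_exp_neg_one _) ha.le
  rw [mul_rpow (by positivity) (by positivity), div_rpow hx ha.le, ← exp_mul, ← exp_mul,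
    neg_mul, div_mul_cancel₀ _ ha.ne', neg_one_mul] at h
  rw [div_rpow ha.le (exp_pos 1).le, ← exp_mul, one_mul, div_eq_mul_inv, ← exp_neg]
  have hpos : 0 < a ^ a := rpow_pos_of_pos ha a
  calc x ^ a * exp (-x) = a ^ a * (x ^ a / a ^ a * exp (-x)) := by field_simp
    _ ≤ a ^ a * exp (-a) := by gcongr

lemma rpow_mul_exp_neg_two_mul_le {a l s : ℝ} (ha : 0 < a) (hl : 0 ≤ l) (hs : 0 < s) :
    l ^ a * exp (-2 * l * s) ≤ (a / exp 1) ^ a * s ^ (-a) * exp (-(l * s)) := by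
  have h := rpow_mul_exp_neg_le ha (mul_nonneg hl hs.le)
  rw [mul_rpow hl hs.le] at h
  have hsa : s ^ (-a) * s ^ a = 1 := by rw [← rpow_add hs]; simp
  have hexp : exp (-2 * l * s) = exp (-(l * s)) * exp (-(l * s)) := by rw [← exp_add]; ring_nf
  calc l ^ a * exp (-2 * l * s)
      = s ^ (-a) * (l ^ a * s ^ a * exp (-(l * s))) * exp (-(l * s)) := by
        rw [hexp]; linear_combination (l ^ a * exp (-(l * s)) * exp (-(l * s))) * hsa.symm
    _ ≤ s ^ (-a) * (a / exp 1) ^ a * exp (-(l * s)) := by gcongr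
    _ = _ := by ring

lemma lam_succ_mul_ge {s : ℝ} (hs : 0 ≤ s) (m : ℕ) :
    π ^ 2 * √s * (m + 1) - π ^ 2 / 2 ≤ lam (m + 1) * s := by
  have hsq : √s ^ 2 = s := sq_sqrt hs
  have key : 2 * ((m : ℝ) + 1) * √s - 1 ≤ ((m : ℝ) + 1) ^ 2 * s := by
    nlinarith [sq_nonneg (((m : ℝ) + 1) * √s - 1)]
  have hl : lam (m + 1) * s = π ^ 2 / 2 * (((m : ℝ) + 1) ^ 2 * s) := by
    unfold lam; push_cast; ring
  rw [hl]
  nlinarith [mul_le_mul_of_nonneg_left key (by positivity : (0 : ℝ) ≤ π ^ 2 / 2)]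

lemma exp_neg_lam_succ_mul_le {s : ℝ} (hs : 0 ≤ s) (m : ℕ) :
    exp (-(lam (m + 1) * s)) ≤ exp (π ^ 2 / 2) * exp (-(π ^ 2 * √s * (m + 1))) := by
  rw [← exp_add, exp_le_exp]
  linarith [lam_succ_mul_ge hs m]

lemma hasSum_exp_neg_mul_succ {u : ℝ} (hu : 0 < u) :
    HasSum (fun m : ℕ => exp (-(u * (m + 1)))) (exp u - 1)⁻¹ := by
  have hr : exp (-u) < 1 := exp_lt_one_iff.mpr (by linarith)
  have h := (hasSum_geometric_of_lt_one (exp_pos _).le hr).mul_left (exp (-u))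
  have hterm : (fun m : ℕ => exp (-(u * (m + 1)))) = fun m => exp (-u) * exp (-u) ^ m := by
    funext m; rw [← exp_nat_mul, ← exp_add]; ring_nf
  have hsum : (exp u - 1)⁻¹ = exp (-u) * (1 - exp (-u))⁻¹ := by
    have : 1 < exp u := one_lt_exp_iff.mpr hu
    rw [exp_neg]; field_simp
  rwa [hterm, hsum]

lemma tsum_exp_neg_mul_succ_le {u : ℝ} (hu : 0 < u) :
    ∑' m : ℕ, exp (-(u * (m + 1))) ≤ u⁻¹ := by
  rw [(hasSum_exp_neg_mul_succ hu).tsum_eq]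
  gcongr
  linarith [add_one_le_exp u]

lemma summable_exp_neg_lam_succ_mul {s : ℝ} (hs : 0 < s) :
    Summable fun m : ℕ => exp (-(lam (m + 1) * s)) :=
  .of_nonneg_of_le (fun _ => (exp_pos _).le) (exp_neg_lam_succ_mul_le hs.le)
    ((hasSum_exp_neg_mul_succ (by positivity)).summable.mul_left _)

lemma tsum_exp_neg_lam_succ_mul_le {s : ℝ} (hs : 0 < s) :
    ∑' m : ℕ, exp (-(lam (m + 1) * s)) ≤
      exp (π ^ 2 / 2) / π ^ 2 * s ^ (-(1 / 2) : ℝ) := by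
  have hu : 0 < π ^ 2 * √s := by positivity
  calc ∑' m : ℕ, exp (-(lam (m + 1) * s))
      ≤ ∑' m : ℕ, exp (π ^ 2 / 2) * exp (-(π ^ 2 * √s * (m + 1))) :=
        (summable_exp_neg_lam_succ_mul hs).tsum_le_tsum (exp_neg_lam_succ_mul_le hs.le)
          ((hasSum_exp_neg_mul_succ hu).summable.mul_left _)
    _ ≤ exp (π ^ 2 / 2) * (π ^ 2 * √s)⁻¹ := by
        rw [tsum_mul_left]; gcongr; exact tsum_exp_neg_mul_succ_le hu
    _ = exp (π ^ 2 / 2) / π ^ 2 * s ^ (-(1 / 2) : ℝ) := by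
        rw [rpow_neg hs.le, ← sqrt_eq_rpow]; ring

noncomputable def heatConst (a : ℝ) : ℝ := (a / exp 1) ^ a * (exp (π ^ 2 / 2) / π ^ 2)

lemma heatConst_pos {a : ℝ} (ha : 0 < a) : 0 < heatConst a := by
  unfold heatConst; positivity

lemma summable_and_tsum_le_of_le_lam_rpow_mul_exp {a c s : ℝ} (ha : 0 < a) (hc : 0 ≤ c)
    (hs : 0 < s) {w : ℕ → ℝ} (hw0 : ∀ m, 0 ≤ w m)
    (hw : ∀ m, w m ≤ lam (m + 1) ^ a * c * exp (-2 * lam (m + 1) * s)) :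
    Summable w ∧ ∑' m, w m ≤ heatConst a * c * s ^ (-(a + 1 / 2)) := by
  have hbound : ∀ m, w m ≤ (a / exp 1) ^ a * c * s ^ (-a) * exp (-(lam (m + 1) * s)) := by
    intro m
    calc w m ≤ c * (lam (m + 1) ^ a * exp (-2 * lam (m + 1) * s)) := by linarith [hw m]
      _ ≤ c * ((a / exp 1) ^ a * s ^ (-a) * exp (-(lam (m + 1) * s))) :=
          mul_le_mul_of_nonneg_left (rpow_mul_exp_neg_two_mul_le ha (lam_nonneg _) hs) hc
      _ = _ := by ring
  have hsummable := (summable_exp_neg_lam_succ_mul hs).mul_left ((a / exp 1) ^ a * c * s ^ (-a))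
  have hsummable_w : Summable w := .of_nonneg_of_le hw0 hbound hsummable
  refine ⟨hsummable_w, ?_⟩
  calc ∑' m, w m
      ≤ (a / exp 1) ^ a * c * s ^ (-a) * ∑' m : ℕ, exp (-(lam (m + 1) * s)) := by
        rw [← tsum_mul_left]; exact hsummable_w.tsum_le_tsum hbound hsummable
    _ ≤ (a / exp 1) ^ a * c * s ^ (-a) * (exp (π ^ 2 / 2) / π ^ 2 * s ^ (-(1 / 2) : ℝ)) := by
        gcongr; exact tsum_exp_neg_lam_succ_mul_le hs
    _ = _ := by
        rw [heatConst, show -(a + 1 / 2) = -a + -(1 / 2) by ring, rpow_add hs]; ring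

lemma summable_and_tsum_le_of_le_grid_level {T p : ℝ} {n N k : ℕ} (hT : 0 < T)
    (ha : 0 < (n : ℝ) - p) (hk : k + 1 < N) {w : ℕ → ℝ} (hw0 : ∀ m, 0 ≤ w m)
    (hw : ∀ m, w m ≤ lam (m + 1) ^ ((n : ℝ) - p) * (T / N) ^ (n + 1) *
      exp (-2 * lam (m + 1) * (T - (k + 1) * (T / N)))) :
    Summable w ∧ ∑' m, w m ≤
      heatConst (n - p) * (T / N) ^ (p + 1 / 2) *
        ((N - 1 - k : ℕ) : ℝ) ^ (-((n - p) + 1 / 2)) := by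
  have hN : (0 : ℝ) < N := by exact_mod_cast (by omega : 0 < N)
  have hh : 0 < T / N := div_pos hT hN
  have hj : (0 : ℝ) < (N - 1 - k : ℕ) := by exact_mod_cast (by omega : 0 < N - 1 - k)
  have hs : T - (k + 1) * (T / N) = ((N - 1 - k : ℕ) : ℝ) * (T / N) := by
    have hN0 : (N : ℝ) ≠ 0 := hN.ne'
    rw [show N - 1 - k = N - (k + 1) by omega, Nat.cast_sub hk.le]; push_cast
    field_simp
  obtain ⟨hsum, hle⟩ := summable_and_tsum_le_of_le_lam_rpow_mul_exp ha
    (by positivity : 0 ≤ (T / N) ^ (n + 1)) (mul_pos hj hh) hw0 (fun m => hs ▸ hw m)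
  refine ⟨hsum, hle.trans_eq ?_⟩
  have hpow : (T / N) ^ (n + 1) * (T / N) ^ (-((n - p) + 1 / 2)) = (T / N) ^ (p + 1 / 2) := by
    rw [← rpow_natCast, ← rpow_add hh]; push_cast; ring_nf
  rw [mul_rpow hj.le hh.le, ← hpow]; ring

lemma sum_range_sub_le_tsum {f : ℕ → ℝ} (hf : Summable f) (hf0 : ∀ j, 0 ≤ f j) (M : ℕ) :
    ∑ k ∈ range M, f (M - k) ≤ ∑' j, f j :=
  calc ∑ k ∈ range M, f (M - k)
      ≤ ∑ k ∈ range (M + 1), f (M + 1 - 1 - k) :=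
        sum_le_sum_of_subset_of_nonneg (range_subset_range.mpr M.le_succ) fun _ _ _ => hf0 _
    _ = ∑ j ∈ range (M + 1), f j := sum_range_reflect f (M + 1)
    _ ≤ ∑' j, f j := hf.sum_le_tsum _ fun j _ => hf0 j

theorem stmt_7_general (T : ℝ) (hT : 0 < T) (p : ℝ) (hp : p < 1 / 2)
    (n : ℕ) (hn : 0 < n) :
    ∃ C : ℝ, 0 < C ∧ ∀ N : ℕ, 2 ≤ N → ∀ v : ℕ → ℕ → ℝ,
      (∀ k : ℕ, k ≤ N - 2 → ∀ m : ℕ, 1 ≤ m →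
        0 ≤ v k m ∧
        v k m ≤ lam m ^ ((n : ℝ) - p) * (T / N) ^ (n + 1) *
          Real.exp (-2 * lam m * (T - (k + 1) * (T / N)))) →
      ∑' m : ℕ, ∑ k ∈ Finset.range (N - 1), v k (m + 1) ≤
        C * (T / N) ^ (p + 1 / 2) := by
  have hn1 : (1 : ℝ) ≤ n := by exact_mod_cast hn
  have ha : 0 < (n : ℝ) - p := by linarith
  set K := heatConst (n - p)
  have hK : 0 < K := heatConst_pos ha
  set f : ℕ → ℝ := fun j => (j : ℝ) ^ (-((n - p) + 1 / 2))
  have hf : Summable f := summable_nat_rpow.mpr (by linarith)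
  have hf0 (j : ℕ) : 0 ≤ f j := by positivity
  refine ⟨K * ∑' j, f j, mul_pos hK (hf.tsum_pos hf0 1 (by simp [f])),
    fun N hN v hv => ?_⟩
  have hlevel (k : ℕ) (hk : k ∈ range (N - 1)) := by
    have hkN : k ≤ N - 2 := by rw [mem_range] at hk; omega
    exact summable_and_tsum_le_of_le_grid_level (w := fun m => v k (m + 1)) hT ha (by omega)
      (fun m => (hv k hkN (m + 1) (by omega)).1) (fun m => (hv k hkN (m + 1) (by omega)).2)
  rw [Summable.tsum_finsetSum fun k hk => (hlevel k hk).1]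
  calc ∑ k ∈ range (N - 1), ∑' m, v k (m + 1)
      ≤ ∑ k ∈ range (N - 1), K * (T / N) ^ (p + 1 / 2) * f (N - 1 - k) :=
        sum_le_sum fun k hk => (hlevel k hk).2
    _ = K * (T / N) ^ (p + 1 / 2) * ∑ k ∈ range (N - 1), f (N - 1 - k) := by rw [mul_sum]
    _ ≤ K * (T / N) ^ (p + 1 / 2) * ∑' j, f j := by
        gcongr; exact sum_range_sub_le_tsum hf hf0 _
    _ = K * (∑' j, f j) * (T / N) ^ (p + 1 / 2) := by ring

/-- Lemma 3.8: summation of dominated double-indexed families over the time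
grid and the spectrum. -/
theorem stmt_7 (T : ℝ) (hT : 0 < T) (p : ℝ) (hp0 : 0 ≤ p) (hp : p < 1 / 2)
    (n : ℕ) (hn : 0 < n) :
    ∃ C : ℝ, 0 < C ∧ ∀ N : ℕ, 2 ≤ N → ∀ v : ℕ → ℕ → ℝ,
      (∀ k : ℕ, k ≤ N - 2 → ∀ m : ℕ, 1 ≤ m →
        0 ≤ v k m ∧
        v k m ≤ lam m ^ ((n : ℝ) - p) * (T / N) ^ (n + 1) *
          Real.exp (-2 * lam m * (T - (k + 1) * (T / N)))) →
      ∑' m : ℕ, ∑ k ∈ Finset.range (N - 1), v k (m + 1) ≤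
        C * (T / N) ^ (p + 1 / 2) :=
  stmt_7_general T hT p hp n hn
end

section
/- Let λ > 0, T > 0, h > 0 and 0 ≤ t_k with t_{k+1} := t_k + h ≤ T. Then ∫_{t_k}^{t_{k+1}} | (1 - (t - t_k) λ/(1+λh))² - 1 | · 2 e^{-2λ(T-t)} dt ≤ 2 (λ h² + λ² h³) e^{-2λ(T - t_{k+1})}. -/
set_option maxHeartbeats 1000000 in
/-- Bound on `∫ |γ(t)² - 1| ∂²u/∂x²(t, ·) dt` over one time step of the
implicit Euler interpolation for the Ornstein–Uhlenbeck process. -/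
theorem stmt_15 (lam T h tk : ℝ) (hlam : 0 < lam) (hT : 0 < T) (hh : 0 < h)
    (htk : 0 ≤ tk) (hend : tk + h ≤ T) :
    (∫ t in tk..(tk + h),
        |(1 - (t - tk) * lam / (1 + lam * h)) ^ 2 - 1| *
          (2 * Real.exp (-2 * lam * (T - t)))) ≤
      2 * (lam * h ^ 2 + lam ^ 2 * h ^ 3) * Real.exp (-2 * lam * (T - (tk + h))) := by
  set C : ℝ := Real.exp (-2 * lam * (T - (tk + h))) with hC
  have hCpos : 0 < C := Real.exp_pos _
  have hle : tk ≤ tk + h := by linarith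
  have hden : 0 < 1 + lam * h := by nlinarith
  -- pointwise bound
  have hpt : ∀ t ∈ Set.Icc tk (tk + h),
      |(1 - (t - tk) * lam / (1 + lam * h)) ^ 2 - 1| *
        (2 * Real.exp (-2 * lam * (T - t))) ≤ 4 * lam * (t - tk) * C := by
    intro t ht
    obtain ⟨ht1, ht2⟩ := ht
    set a : ℝ := (t - tk) * lam / (1 + lam * h) with ha
    have ha0 : 0 ≤ a := div_nonneg (mul_nonneg (by linarith) hlam.le) hden.le
    have ha1 : a ≤ 1 := by
      rw [ha, div_le_one hden]
      nlinarith
    have habs : |(1 - a) ^ 2 - 1| ≤ 2 * a := by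
      rw [abs_le]
      constructor <;> nlinarith
    have haa : a ≤ lam * (t - tk) := by
      rw [ha, div_le_iff₀ hden]
      nlinarith [mul_nonneg (mul_nonneg hlam.le (sub_nonneg.mpr ht1)) (mul_nonneg hlam.le hh.le)]
    have hexp : Real.exp (-2 * lam * (T - t)) ≤ C := by
      rw [hC]
      apply Real.exp_le_exp.mpr
      nlinarith
    have hexp0 : 0 < Real.exp (-2 * lam * (T - t)) := Real.exp_pos _
    calc |(1 - a) ^ 2 - 1| * (2 * Real.exp (-2 * lam * (T - t)))
        ≤ (2 * a) * (2 * C) := by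
          apply mul_le_mul habs (by linarith) (by positivity) (by positivity)
      _ ≤ (2 * (lam * (t - tk))) * (2 * C) := by nlinarith
      _ = 4 * lam * (t - tk) * C := by ring
  -- comparison of integrals
  have hint : (∫ t in tk..(tk + h),
      |(1 - (t - tk) * lam / (1 + lam * h)) ^ 2 - 1| *
        (2 * Real.exp (-2 * lam * (T - t)))) ≤
      ∫ t in tk..(tk + h), 4 * lam * (t - tk) * C := by
    apply intervalIntegral.integral_mono_on hle _ _ hpt
    · apply Continuous.intervalIntegrable
      continuity
    · apply Continuous.intervalIntegrable
      continuity
  have hval : (∫ t in tk..(tk + h), 4 * lam * (t - tk) * C) = 2 * lam * h ^ 2 * C := by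
    have : (∫ t in tk..(tk + h), 4 * lam * (t - tk) * C)
        = ∫ t in tk..(tk + h), (4 * lam * C) * t + (-(4 * lam * C) * tk) := by
      congr 1; funext t; ring
    rw [this, intervalIntegral.integral_add (Continuous.intervalIntegrable (by continuity) _ _)
      intervalIntegrable_const, intervalIntegral.integral_const_mul,
      integral_id, intervalIntegral.integral_const]
    simp only [smul_eq_mul]; ring
  rw [hval] at hint
  refine hint.trans ?_
  have h2 : 0 ≤ 2 * lam ^ 2 * h ^ 3 * C := by positivity
  nlinarith
end
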